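/- arXiv:2107.12047 — 4 statements merged into one kernel-verified Lean document; each statement's English description precedes it below -/
import Mathlib

section
/- Let $A$ be a finite set, $G$ a countable group, and $X \subseteq A^G$ a subshift of finite type. Then $X$ is splicable: there exists a finite subset $\Delta \subseteq G$ containing $1_G$ such that for any finite subset $B \subseteq G$ and any $x, y \in X$ with $x|_{B\Delta \setminus B} = y|_{B\Delta \setminus B}$, the configuration $z \in A^G$ defined by $z|_B = x|_B$ and $z|_{G \setminus B} = y|_{G \setminus B}$ belongs to $X$. -/
/-!
A configuration belongs to a subshift of finite type as soon as each of its windows `g⁻¹ Ω` shows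
an allowed pattern. Take `Δ = {1} ∪ Ω⁻¹Ω`. A window that meets `B` lies inside `BΔ`, where the
splice agrees with `x`; a window that misses `B` sees only `y`. Either way the pattern is allowed.
-/

open Pointwise

section Splice

variable {G A : Type*} [Group G] [DecidableEq G]

lemma inv_mul_mem_mul_inv_mul {B Ω : Finset G} {g ω₀ ω : G} (h₀ : g⁻¹ * ω₀ ∈ B)
    (hω₀ : ω₀ ∈ Ω) (hω : ω ∈ Ω) : g⁻¹ * ω ∈ B * (Ω⁻¹ * Ω) := by
  have hfactor : g⁻¹ * ω = (g⁻¹ * ω₀) * (ω₀⁻¹ * ω) := by group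
  rw [hfactor]
  exact Finset.mul_mem_mul h₀ (Finset.mul_mem_mul (Finset.inv_mem_inv hω₀) hω)

lemma splice_window_eq_or {Ω B Δ : Finset G} (hΔ : Ω⁻¹ * Ω ⊆ Δ) {x y : G → A}
    (hxy : ∀ g ∈ (B * Δ : Finset G) \ B, x g = y g) (g : G) :
    (fun ω : Ω => if g⁻¹ * ω ∈ B then x (g⁻¹ * ω) else y (g⁻¹ * ω)) =
        (fun ω : Ω => x (g⁻¹ * ω)) ∨
      (fun ω : Ω => if g⁻¹ * ω ∈ B then x (g⁻¹ * ω) else y (g⁻¹ * ω)) =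
        (fun ω : Ω => y (g⁻¹ * ω)) := by
  by_cases hmeet : ∃ ω₀ : Ω, g⁻¹ * (ω₀ : G) ∈ B
  · obtain ⟨ω₀, h₀⟩ := hmeet
    left
    funext ω
    split_ifs with hω
    · rfl
    · have hcollar : g⁻¹ * (ω : G) ∈ (B * Δ) \ B :=
        Finset.mem_sdiff.mpr ⟨Finset.mul_subset_mul_left hΔ
          (inv_mul_mem_mul_inv_mul h₀ ω₀.2 ω.2), hω⟩
      exact (hxy _ hcollar).symm
  · right
    funext ω
    exact if_neg fun hω => hmeet ⟨ω, hω⟩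

end Splice

theorem stmt_5_general {A G : Type*} [Group G] [DecidableEq G]
    (Ω : Finset G) (𝒜 : Set (Ω → A))
    (X : Set (G → A))
    (hX : X = {x : G → A | ∀ g : G, (fun ω : Ω => x (g⁻¹ * (ω : G))) ∈ 𝒜}) :
    ∃ Δ : Finset G, (1 : G) ∈ Δ ∧
      ∀ (B : Finset G) (x y : G → A), x ∈ X → y ∈ X →
        (∀ g ∈ (B * Δ : Finset G) \ B, x g = y g) →
        (fun g : G => if g ∈ B then x g else y g) ∈ X := by
  subst hX
  refine ⟨insert 1 (Ω⁻¹ * Ω), Finset.mem_insert_self _ _, fun B x y hx hy hxy g => ?_⟩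
  rcases splice_window_eq_or (Finset.subset_insert 1 _) hxy g with hwin | hwin
  · exact hwin ▸ hx g
  · exact hwin ▸ hy g

theorem stmt_5 {A G : Type*} [Fintype A] [Group G] [Countable G] [DecidableEq G]
    (Ω : Finset G) (𝒜 : Set (Ω → A))
    (X : Set (G → A))
    (hX : X = {x : G → A | ∀ g : G, (fun ω : Ω => x (g⁻¹ * (ω : G))) ∈ 𝒜}) :
    ∃ Δ : Finset G, (1 : G) ∈ Δ ∧
      ∀ (B : Finset G) (x y : G → A), x ∈ X → y ∈ X →
        (∀ g ∈ (B * Δ : Finset G) \ B, x g = y g) →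
        (fun g : G => if g ∈ B then x g else y g) ∈ X :=
  stmt_5_general Ω 𝒜 X hX
end

section
/- Let $G$ be a group, $F \subseteq G$ finite nonempty with $1_G \notin F$, and let $X_{\mathrm{hard},F} = \{x \in \{0,1\}^G : x(g)x(gs) = 0 \text{ for all } g \in G, s \in F\}$. Then $X_{\mathrm{hard},F}$ is strongly irreducible: there is a finite subset $\Delta \subseteq G$ containing $1_G$ such that for any finite $A_1, A_2 \subseteq G$ with $A_1 \Delta \cap A_2 = \varnothing$ and any $x_1, x_2 \in X_{\mathrm{hard},F}$, there exists $z \in X_{\mathrm{hard},F}$ with $z|_{A_1} = x_1|_{A_1}$ and $z|_{A_2} = x_2|_{A_2}$. -/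
/-!
Take `Δ = {1} ∪ F ∪ F⁻¹` and glue `x₁` on `A₁`, `x₂` on `A₂` and `false` elsewhere. Since `false` never
violates a constraint, a forbidden pair `g, g * s` of the glued configuration would have to join `A₁` to
`A₂`; but then `g * s ∈ A₁ * F` or `g = (g * s) * s⁻¹ ∈ A₁ * F⁻¹`, both excluded by the choice of `Δ`.
-/

open Pointwise

section Glue

variable {α : Type*} [DecidableEq α]

def glue (A₁ A₂ : Finset α) (x₁ x₂ : α → Bool) : α → Bool :=
  A₁.piecewise x₁ (A₂.piecewise x₂ fun _ => false)

theorem glue_eq_of_mem_right {A₁ A₂ : Finset α} {x₁ x₂ : α → Bool} {a : α}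
    (h₁ : a ∉ A₁) (h₂ : a ∈ A₂) : glue A₁ A₂ x₁ x₂ a = x₂ a := by
  simp [glue, h₁, h₂]

theorem glue_eq_true_iff {A₁ A₂ : Finset α} {x₁ x₂ : α → Bool} {a : α} :
    glue A₁ A₂ x₁ x₂ a = true ↔ a ∈ A₁ ∧ x₁ a = true ∨ a ∉ A₁ ∧ a ∈ A₂ ∧ x₂ a = true := by
  unfold glue
  by_cases h₁ : a ∈ A₁ <;> by_cases h₂ : a ∈ A₂ <;> simp [h₁, h₂]

end Glue

section HardCore

variable {G : Type*} [Group G] [DecidableEq G]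

def hardCoreShift (F : Finset G) : Set (G → Bool) :=
  {x | ∀ g : G, ∀ s ∈ F, ¬(x g = true ∧ x (g * s) = true)}

theorem glue_mem_hardCoreShift {F A₁ A₂ : Finset G} {x₁ x₂ : G → Bool}
    (hx₁ : x₁ ∈ hardCoreShift F) (hx₂ : x₂ ∈ hardCoreShift F)
    (hsep : ∀ g : G, ∀ s ∈ F, ¬(g ∈ A₁ ∧ g * s ∈ A₂) ∧ ¬(g ∈ A₂ ∧ g * s ∈ A₁)) :
    glue A₁ A₂ x₁ x₂ ∈ hardCoreShift F := by
  rintro g s hs ⟨hg, hgs⟩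
  rw [glue_eq_true_iff] at hg hgs
  have := hx₁ g s hs
  have := hx₂ g s hs
  have := hsep g s hs
  tauto

theorem mul_notMem_of_mul_inter_eq_empty {A₁ A₂ Δ : Finset G} (h : A₁ * Δ ∩ A₂ = ∅)
    {a d : G} (ha : a ∈ A₁) (hd : d ∈ Δ) : a * d ∉ A₂ := fun hmem =>
  Finset.eq_empty_iff_forall_notMem.1 h _ (Finset.mem_inter.2 ⟨Finset.mul_mem_mul ha hd, hmem⟩)

end HardCore

theorem stmt_7_general {G : Type*} [Group G] [DecidableEq G] (F : Finset G)
    (X : Set (G → Bool))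
    (hX : X = {x : G → Bool | ∀ g : G, ∀ s ∈ F, ¬(x g = true ∧ x (g * s) = true)}) :
    ∃ Δ : Finset G, (1 : G) ∈ Δ ∧
      ∀ (A₁ A₂ : Finset G), (A₁ * Δ : Finset G) ∩ A₂ = ∅ →
        ∀ x₁ ∈ X, ∀ x₂ ∈ X, ∃ z ∈ X,
          (∀ g ∈ A₁, z g = x₁ g) ∧ (∀ g ∈ A₂, z g = x₂ g) := by
  change X = hardCoreShift F at hX
  subst hX
  refine ⟨insert 1 (F ∪ F⁻¹), by simp, fun A₁ A₂ hdisj x₁ hx₁ x₂ hx₂ => ?_⟩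
  have hΔ {a d : G} (ha : a ∈ A₁) (hd : d ∈ insert 1 (F ∪ F⁻¹)) : a * d ∉ A₂ :=
    mul_notMem_of_mul_inter_eq_empty hdisj ha hd
  have hsep : ∀ g : G, ∀ s ∈ F, ¬(g ∈ A₁ ∧ g * s ∈ A₂) ∧ ¬(g ∈ A₂ ∧ g * s ∈ A₁) := by
    refine fun g s hs => ⟨fun ⟨hg, hgs⟩ => hΔ hg (by simp [hs]) hgs, fun ⟨hg, hgs⟩ => ?_⟩
    exact hΔ hgs (d := s⁻¹) (by simp [hs]) (by simpa using hg)
  refine ⟨glue A₁ A₂ x₁ x₂, glue_mem_hardCoreShift hx₁ hx₂ hsep,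
    fun g hg => Finset.piecewise_eq_of_mem _ _ _ hg, fun g hg => ?_⟩
  exact glue_eq_of_mem_right (fun h => hΔ h (d := 1) (by simp) (by simpa using hg)) hg

theorem stmt_7 {G : Type*} [Group G] [DecidableEq G] (F : Finset G) (hF : F.Nonempty)
    (h1 : (1 : G) ∉ F)
    (X : Set (G → Bool))
    (hX : X = {x : G → Bool | ∀ g : G, ∀ s ∈ F, ¬(x g = true ∧ x (g * s) = true)}) :
    ∃ Δ : Finset G, (1 : G) ∈ Δ ∧
      ∀ (A₁ A₂ : Finset G), (A₁ * Δ : Finset G) ∩ A₂ = ∅ →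
        ∀ x₁ ∈ X, ∀ x₂ ∈ X, ∃ z ∈ X,
          (∀ g ∈ A₁, z g = x₁ g) ∧ (∀ g ∈ A₂, z g = x₂ g) :=
  stmt_7_general F X hX
end

section
/- Let $A = \{0, 1, 2\}$, $G = \mathbb{Z}$, and let $X \subseteq A^{\mathbb{Z}}$ be the subshift consisting of all $x : \mathbb{Z} \to A$ such that for every $n \in \mathbb{Z}$, the pair $(x(n), x(n+1))$ belongs to $\{(0,0), (0,1), (1,1), (1,2), (2,2)\}$. Define $f : A^{\mathbb{Z}} \to A^{\mathbb{Z}}$ by $f(x)(n) = 1$ if $(x(n-1), x(n)) = (1,2)$ and $f(x)(n) = x(n)$ otherwise. Then $f(X) \subseteq X$, $f$ restricted to $X$ is injective, shift-equivariant, and continuous, but $f(X) \neq X$; hence $(X, \mathbb{Z})$ is not surjunctive. -/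
/-!
Points of the edge shift `X` are non-decreasing sequences with steps of size at most one, and
the code `f` turns the first `2` following a `1` into a `1`. It is injective on `X` because the
old value is read off from the new values at `n` and `n + 1`: it is `2` exactly where the
image shows the word `12`, and equal to the image elsewhere. It misses the point `…0012…` of
`X`: a preimage would have to read `0, 1` at positions `-1, 0`, and then its image at `1`
cannot be `2`.
-/

namespace SlidingCode

variable {A : Type*}

def edgeShift (S : Set (A × A)) : Set (ℤ → A) :=
  {x | ∀ n, (x n, x (n + 1)) ∈ S}

def slidingCode (φ : A → A → A) (x : ℤ → A) : ℤ → A :=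
  fun n => φ (x (n - 1)) (x n)

variable {φ : A → A → A} {S : Set (A × A)}

lemma slidingCode_apply_add_one (x : ℤ → A) (n : ℤ) :
    slidingCode φ x (n + 1) = φ (x n) (x (n + 1)) := by
  simp only [slidingCode, add_sub_cancel_right]

lemma mem_edgeShift_sub_one {x : ℤ → A} (hx : x ∈ edgeShift S) (n : ℤ) :
    (x (n - 1), x n) ∈ S := by
  simpa only [sub_add_cancel] using hx (n - 1)

lemma slidingCode_shift (x : ℤ → A) (g : ℤ) :
    slidingCode φ (fun h => x (h - g)) = fun h => slidingCode φ x (h - g) := by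
  funext n
  simp only [slidingCode, sub_right_comm]

lemma continuous_slidingCode [TopologicalSpace A] [DiscreteTopology A] :
    Continuous (slidingCode φ) :=
  continuous_pi fun n =>
    have hwindow : Continuous fun x : ℤ → A => (x (n - 1), x n) :=
      (continuous_apply (n - 1)).prodMk (continuous_apply n)
    (continuous_of_discreteTopology (f := Function.uncurry φ)).comp hwindow

lemma mapsTo_slidingCode
    (h : ∀ a b c, (a, b) ∈ S → (b, c) ∈ S → (φ a b, φ b c) ∈ S) :
    Set.MapsTo (slidingCode φ) (edgeShift S) (edgeShift S) := by
  intro x hx n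
  rw [slidingCode_apply_add_one]
  exact h _ _ _ (mem_edgeShift_sub_one hx n) (hx n)

lemma injOn_slidingCode (ψ : A → A → A)
    (h : ∀ a b c, (a, b) ∈ S → (b, c) ∈ S → ψ (φ a b) (φ b c) = b) :
    Set.InjOn (slidingCode φ) (edgeShift S) := by
  have recover : ∀ x ∈ edgeShift S, ∀ n,
      ψ (slidingCode φ x n) (slidingCode φ x (n + 1)) = x n := fun x hx n => by
    rw [slidingCode_apply_add_one]
    exact h _ _ _ (mem_edgeShift_sub_one hx n) (hx n)
  intro x hx x' hx' heq
  funext n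
  rw [← recover x hx, ← recover x' hx', heq]

lemma notMem_image_slidingCode {p q r : A}
    (h : ∀ a b c d, (a, b) ∈ S → (b, c) ∈ S → (c, d) ∈ S → (φ a b, φ b c, φ c d) ≠ (p, q, r))
    {y : ℤ → A} (hy : (y (-1), y 0, y 1) = (p, q, r)) :
    y ∉ slidingCode φ '' edgeShift S := by
  rintro ⟨x, hx, rfl⟩
  refine h (x (-2)) (x (-1)) (x 0) (x 1) (hx (-2)) (hx (-1)) (hx 0) ?_
  simpa only [slidingCode, show (-1 : ℤ) - 1 = -2 by norm_num, zero_sub, sub_self] using hy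

end SlidingCode

open SlidingCode

def weissEdges : Set (Fin 3 × Fin 3) := {(0,0), (0,1), (1,1), (1,2), (2,2)}

def weissRule (a b : Fin 3) : Fin 3 := if a = 1 ∧ b = 2 then 1 else b

lemma weissRule_edge :
    ∀ a b c, (a, b) ∈ weissEdges → (b, c) ∈ weissEdges →
      (weissRule a b, weissRule b c) ∈ weissEdges := by
  unfold weissEdges weissRule; decide

def weissUnrule (u v : Fin 3) : Fin 3 := if u = 1 ∧ v = 2 then 2 else u

lemma weissUnrule_weissRule :
    ∀ a b c, (a, b) ∈ weissEdges → (b, c) ∈ weissEdges →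
      weissUnrule (weissRule a b) (weissRule b c) = b := by
  unfold weissEdges weissRule weissUnrule; decide

lemma weissRule_not_produce_012 :
    ∀ a b c d, (a, b) ∈ weissEdges → (b, c) ∈ weissEdges → (c, d) ∈ weissEdges →
      (weissRule a b, weissRule b c, weissRule c d) ≠ (0, 1, 2) := by
  unfold weissEdges weissRule; decide

def stepPoint (n : ℤ) : Fin 3 := if n < 0 then 0 else if n = 0 then 1 else 2

lemma stepPoint_mem_edgeShift : stepPoint ∈ edgeShift weissEdges := by
  intro n
  simp only [stepPoint, weissEdges, Set.mem_insert_iff, Set.mem_singleton_iff, Prod.mk.injEq]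
  split_ifs <;> omega

theorem stmt_8
    (X : Set (ℤ → Fin 3))
    (hX : X = {x : ℤ → Fin 3 | ∀ n : ℤ,
      (x n, x (n + 1)) ∈ ({(0,0), (0,1), (1,1), (1,2), (2,2)} : Set (Fin 3 × Fin 3))})
    (f : (ℤ → Fin 3) → (ℤ → Fin 3))
    (hf : f = fun x n => if x (n - 1) = 1 ∧ x n = 2 then 1 else x n) :
    f '' X ⊆ X ∧
    Set.InjOn f X ∧
    (∀ (g : ℤ), ∀ x ∈ X, f (fun h => x (h - g)) = fun h => f x (h - g)) ∧
    ContinuousOn f X ∧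
    f '' X ≠ X := by
  obtain rfl : X = edgeShift weissEdges := hX
  obtain rfl : f = slidingCode weissRule := hf
  refine ⟨(mapsTo_slidingCode weissRule_edge).image_subset,
    injOn_slidingCode weissUnrule weissUnrule_weissRule,
    fun g x _ => slidingCode_shift x g,
    continuous_slidingCode.continuousOn, fun himage => ?_⟩
  refine notMem_image_slidingCode weissRule_not_produce_012 (y := stepPoint) (by decide) ?_
  rw [himage]
  exact stepPoint_mem_edgeShift
end

section
/- Let $A$ be a finite set, $G$ a countable group, and $X \subseteq A^G$ a subshift. If $X$ is splicable (i.e., there exists finite $\Delta \ni 1_G$ such that for any finite $B \subseteq G$ and $x, y \in X$ with $x|_{B\Delta \setminus B} = y|_{B\Delta \setminus B}$, the configuration agreeing with $x$ on $B$ and with $y$ on $G \setminus B$ lies in $X$), then $(X, G)$ satisfies the strong topological Markov property. -/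
/-!
Since `ρ u v ≤ 2 ^ (-n)` exactly when `u` and `v` agree on the window `E = Ω n`, closeness of
translates `s • u`, `s • v` means agreement on `s⁻¹ E`. Choose `n` with `2 ^ (-n) < ε` and
`1 ∈ E`, and put `δ = 2 ^ (-n)`, `F = (E ∪ Δ⁻¹) E⁻¹`. The configuration `z` that copies `x` on
`C = B⁻¹ E` and `y` elsewhere lies in `X` by splicability, because every `g ∈ CΔ \ C` has
`g⁻¹ ∈ FB \ B`, where `x` and `y` agree. Then `z` agrees with `x` on `s⁻¹ E` for `s ∈ FB` and
with `y` on `s⁻¹ E` for `s ∉ B`.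
-/

open Pointwise Filter Topology Set

section CylinderMetric

variable {α β : Type*} {Ω : ℕ → Set α} {ρ : (α → β) → (α → β) → ℝ}

theorem exists_dist_eq_two_zpow_of_ne (hΩ0 : Ω 0 = ∅) (hΩexh : ∀ a, ∃ n, a ∈ Ω n)
    (hρ : ∀ (x y : α → β) (n : ℕ), x ≠ y → EqOn x y (Ω n) → ¬ EqOn x y (Ω (n + 1)) →
      ρ x y = (2 : ℝ) ^ (-(n : ℤ)))
    {u v : α → β} (huv : u ≠ v) :
    ∃ N : ℕ, EqOn u v (Ω N) ∧ ¬ EqOn u v (Ω (N + 1)) ∧ ρ u v = (2 : ℝ) ^ (-(N : ℤ)) := by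
  classical
  have hex : ∃ m, ¬ EqOn u v (Ω m) := by
    obtain ⟨a, ha⟩ := Function.ne_iff.mp huv
    obtain ⟨m, hm⟩ := hΩexh a
    exact ⟨m, fun h => ha (h hm)⟩
  obtain ⟨N, hN⟩ : ∃ N, Nat.find hex = N + 1 :=
    Nat.exists_eq_add_one.mpr <| Nat.pos_of_ne_zero fun h0 =>
      Nat.find_spec hex (by rw [h0, hΩ0]; exact eqOn_empty u v)
  have hagree : EqOn u v (Ω N) := not_not.mp (Nat.find_min hex (by omega))
  have hdisagree : ¬ EqOn u v (Ω (N + 1)) := hN ▸ Nat.find_spec hex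
  exact ⟨N, hagree, hdisagree, hρ u v N huv hagree hdisagree⟩

theorem dist_le_two_zpow_iff_eqOn (hΩ0 : Ω 0 = ∅) (hΩmono : Monotone Ω)
    (hΩexh : ∀ a, ∃ n, a ∈ Ω n) (hρeq : ∀ x, ρ x x = 0)
    (hρ : ∀ (x y : α → β) (n : ℕ), x ≠ y → EqOn x y (Ω n) → ¬ EqOn x y (Ω (n + 1)) →
      ρ x y = (2 : ℝ) ^ (-(n : ℤ)))
    (u v : α → β) (n : ℕ) :
    ρ u v ≤ (2 : ℝ) ^ (-(n : ℤ)) ↔ EqOn u v (Ω n) := by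
  rcases eq_or_ne u v with rfl | huv
  · simp only [hρeq, eqOn_refl, iff_true]
    positivity
  obtain ⟨N, hagree, hdisagree, hρuv⟩ := exists_dist_eq_two_zpow_of_ne hΩ0 hΩexh hρ huv
  rw [hρuv, zpow_le_zpow_iff_right₀ one_lt_two, neg_le_neg_iff, Nat.cast_le]
  constructor
  · exact fun hnN => hagree.mono (hΩmono hnN)
  · intro h
    by_contra! hNn
    exact hdisagree (h.mono (hΩmono hNn))

end CylinderMetric

section Splicing

variable {G α : Type*} [Group G] [DecidableEq G]

def IsSplicable (X : Set (G → α)) (Δ : Finset G) : Prop :=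
  ∀ (B : Finset G) (x y : G → α), x ∈ X → y ∈ X → (∀ g ∈ (B * Δ : Finset G) \ B, x g = y g) →
    (fun g : G => if g ∈ B then x g else y g) ∈ X

theorem inv_mem_mul_sdiff_of_mem_mul_sdiff {B E Δ : Finset G} (hE : (1 : G) ∈ E) {g : G}
    (hg : g ∈ (B⁻¹ * E * Δ : Finset G) \ (B⁻¹ * E)) :
    g⁻¹ ∈ ((E ∪ Δ⁻¹) * E⁻¹ * B : Finset G) \ B := by
  obtain ⟨hgΔ, hgC⟩ := Finset.mem_sdiff.mp hg
  obtain ⟨c, hc, d, hd, rfl⟩ := Finset.mem_mul.mp hgΔ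
  obtain ⟨b, hb, e, he, rfl⟩ := Finset.mem_mul.mp hc
  refine Finset.mem_sdiff.mpr ⟨Finset.mem_mul.mpr ⟨d⁻¹ * e⁻¹, ?_, b⁻¹, Finset.mem_inv'.mp hb, ?_⟩, ?_⟩
  · exact Finset.mul_mem_mul (Finset.mem_union_right _ (Finset.inv_mem_inv hd))
      (Finset.inv_mem_inv he)
  · group
  · exact fun hB => hgC (by simpa using Finset.mul_mem_mul (Finset.inv_mem_inv hB) hE)

theorem mem_mul_sdiff_of_inv_mul_mem {B E Δ : Finset G} {s h : G} (hs : s ∉ B) (hh : h ∈ E)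
    (hsh : s⁻¹ * h ∈ (B⁻¹ * E : Finset G)) :
    s ∈ ((E ∪ Δ⁻¹) * E⁻¹ * B : Finset G) \ B := by
  obtain ⟨b, hb, e, he, hbe⟩ := Finset.mem_mul.mp hsh
  refine Finset.mem_sdiff.mpr ⟨Finset.mem_mul.mpr ⟨h * e⁻¹, ?_, b⁻¹, Finset.mem_inv'.mp hb, ?_⟩, hs⟩
  · exact Finset.mul_mem_mul (Finset.mem_union_left _ hh) (Finset.inv_mem_inv he)
  · rw [mul_assoc, ← mul_inv_rev, hbe]
    group

theorem IsSplicable.exists_eqOn_translates {X : Set (G → α)} {Δ E : Finset G}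
    (hΔ : IsSplicable X Δ) (hE : (1 : G) ∈ E) {B : Finset G} {x y : G → α} (hx : x ∈ X)
    (hy : y ∈ X)
    (hxy : ∀ s ∈ ((E ∪ Δ⁻¹) * E⁻¹ * B : Finset G) \ B, ∀ h ∈ E, x (s⁻¹ * h) = y (s⁻¹ * h)) :
    ∃ z ∈ X, (∀ s ∈ ((E ∪ Δ⁻¹) * E⁻¹ * B : Finset G), ∀ h ∈ E, z (s⁻¹ * h) = x (s⁻¹ * h)) ∧
      ∀ s ∉ B, ∀ h ∈ E, z (s⁻¹ * h) = y (s⁻¹ * h) := by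
  refine ⟨fun g => if g ∈ B⁻¹ * E then x g else y g, ?_, ?_, ?_⟩
  · refine hΔ _ x y hx hy fun g hg => ?_
    simpa using hxy g⁻¹ (inv_mem_mul_sdiff_of_mem_mul_sdiff hE hg) 1 hE
  · intro s hs h hh
    by_cases hsh : s⁻¹ * h ∈ B⁻¹ * E
    · simp only [if_pos hsh]
    · have hsB : s ∉ B := fun hsB => hsh (Finset.mul_mem_mul (Finset.inv_mem_inv hsB) hh)
      simp only [if_neg hsh]
      exact (hxy s (Finset.mem_sdiff.mpr ⟨hs, hsB⟩) h hh).symm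
  · intro s hs h hh
    by_cases hsh : s⁻¹ * h ∈ B⁻¹ * E
    · simp only [if_pos hsh]
      exact hxy s (mem_mul_sdiff_of_inv_mul_mem hs hh hsh) h hh
    · simp only [if_neg hsh]

end Splicing

theorem stmt_12_general {A G : Type*} [Group G] [DecidableEq G]
    (Ω : ℕ → Finset G)
    (hΩ0 : Ω 0 = ∅)
    (hΩmono : ∀ n, Ω n ⊆ Ω (n + 1))
    (hΩexh : ∀ g : G, ∃ n, g ∈ Ω n)
    (ρ : (G → A) → (G → A) → ℝ)
    (hρeq : ∀ x : G → A, ρ x x = 0)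
    (hρ : ∀ (x y : G → A) (n : ℕ), x ≠ y →
      (∀ g ∈ Ω n, x g = y g) → ¬ (∀ g ∈ Ω (n + 1), x g = y g) →
      ρ x y = (2 : ℝ) ^ (-(n : ℤ)))
    (X : Set (G → A))
    (hsplice : ∃ Δ : Finset G, (1 : G) ∈ Δ ∧
      ∀ (B : Finset G) (x y : G → A), x ∈ X → y ∈ X →
        (∀ g ∈ (B * Δ : Finset G) \ B, x g = y g) →
        (fun g : G => if g ∈ B then x g else y g) ∈ X) :
    ∀ ε : ℝ, 0 < ε → ∃ δ : ℝ, 0 < δ ∧ ∃ F : Finset G, (1 : G) ∈ F ∧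
      ∀ (B : Finset G) (x y : G → A), x ∈ X → y ∈ X →
        (∀ s ∈ (F * B : Finset G) \ B,
          ρ (fun h => x (s⁻¹ * h)) (fun h => y (s⁻¹ * h)) ≤ δ) →
        ∃ z ∈ X,
          (∀ s ∈ (F * B : Finset G),
            ρ (fun h => z (s⁻¹ * h)) (fun h => x (s⁻¹ * h)) ≤ ε) ∧
          (∀ s : G, s ∉ B →
            ρ (fun h => z (s⁻¹ * h)) (fun h => y (s⁻¹ * h)) ≤ ε) := by
  intro ε hε
  have hmono : Monotone fun n => (Ω n : Set G) :=
    monotone_nat_of_le_succ fun n => Finset.coe_subset.mpr (hΩmono n)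
  have hdist := dist_le_two_zpow_iff_eqOn (by simp [hΩ0]) hmono hΩexh hρeq hρ
  have hsmall : Tendsto (fun n : ℕ => (2 : ℝ) ^ (-(n : ℤ))) atTop (𝓝 0) := by
    simpa only [zpow_neg, zpow_natCast, Function.comp_def] using
      tendsto_inv_atTop_zero.comp (tendsto_pow_atTop_atTop_of_one_lt one_lt_two)
  obtain ⟨m, hm⟩ := hΩexh 1
  obtain ⟨n, hnε, hn1⟩ := ((hsmall.eventually (gt_mem_nhds hε)).and
    (eventually_atTop.mpr ⟨m, fun n hn => hmono hn hm⟩)).exists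
  obtain ⟨Δ, -, hΔ⟩ := hsplice
  have hF1 : (1 : G) ∈ (Ω n ∪ Δ⁻¹) * (Ω n)⁻¹ := by
    simpa using Finset.mul_mem_mul (Finset.mem_union_left Δ⁻¹ hn1) (Finset.inv_mem_inv hn1)
  refine ⟨(2 : ℝ) ^ (-(n : ℤ)), by positivity, _, hF1, fun B x y hx hy hxy => ?_⟩
  obtain ⟨z, hz, hzx, hzy⟩ := IsSplicable.exists_eqOn_translates hΔ hn1 hx hy
    fun s hs => (hdist _ _ n).mp (hxy s hs)
  exact ⟨z, hz, fun s hs => ((hdist _ _ n).mpr (hzx s hs)).trans hnε.le,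
    fun s hs => ((hdist _ _ n).mpr (hzy s hs)).trans hnε.le⟩

theorem stmt_12 {A G : Type*} [Fintype A] [TopologicalSpace A] [DiscreteTopology A]
    [Group G] [Countable G] [DecidableEq G]
    (Ω : ℕ → Finset G)
    (hΩ0 : Ω 0 = ∅) (hΩ1 : Ω 1 = {1})
    (hΩsym : ∀ n, ∀ g : G, g ∈ Ω n ↔ g⁻¹ ∈ Ω n)
    (hΩmono : ∀ n, Ω n ⊆ Ω (n + 1))
    (hΩexh : ∀ g : G, ∃ n, g ∈ Ω n)
    (ρ : (G → A) → (G → A) → ℝ)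
    (hρeq : ∀ x : G → A, ρ x x = 0)
    (hρ : ∀ (x y : G → A) (n : ℕ), x ≠ y →
      (∀ g ∈ Ω n, x g = y g) → ¬ (∀ g ∈ Ω (n + 1), x g = y g) →
      ρ x y = (2 : ℝ) ^ (-(n : ℤ)))
    (X : Set (G → A)) (hXcl : IsClosed X)
    (hXinv : ∀ (g : G), ∀ x ∈ X, (fun h : G => x (g⁻¹ * h)) ∈ X)
    (hsplice : ∃ Δ : Finset G, (1 : G) ∈ Δ ∧
      ∀ (B : Finset G) (x y : G → A), x ∈ X → y ∈ X →
        (∀ g ∈ (B * Δ : Finset G) \ B, x g = y g) →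
        (fun g : G => if g ∈ B then x g else y g) ∈ X) :
    ∀ ε : ℝ, 0 < ε → ∃ δ : ℝ, 0 < δ ∧ ∃ F : Finset G, (1 : G) ∈ F ∧
      ∀ (B : Finset G) (x y : G → A), x ∈ X → y ∈ X →
        (∀ s ∈ (F * B : Finset G) \ B,
          ρ (fun h => x (s⁻¹ * h)) (fun h => y (s⁻¹ * h)) ≤ δ) →
        ∃ z ∈ X,
          (∀ s ∈ (F * B : Finset G),
            ρ (fun h => z (s⁻¹ * h)) (fun h => x (s⁻¹ * h)) ≤ ε) ∧
          (∀ s : G, s ∉ B →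
            ρ (fun h => z (s⁻¹ * h)) (fun h => y (s⁻¹ * h)) ≤ ε) :=
  stmt_12_general Ω hΩ0 hΩmono hΩexh ρ hρeq hρ X hsplice
end
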